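/- For each natural number l ≥ 1 and 0 < v < 1, the l-th derivative of t ↦ e^{-√2 d_v(t)} = (v²/8) sech(√2 v t)² satisfies |d^l/dt^l [e^{-√2 d_v(t)}]| ≤ C_l v^{2+l} e^{-2√2 v |t|} for a constant C_l depending only on l. -/

import Mathlib

/-!
Every derivative of `sech² x` has the form `sech² x · p (tanh x)` for a polynomial `p` depending
only on the order, since `sech²` and `tanh` differentiate back into this family. As `|tanh| < 1`
and `sech² x ≤ 4 e^{-2|x|}`, the `l`-th derivative is bounded by a constant times `e^{-2|x|}`.
Now `e^{-√2 d_v(t)} = (v²/8) sech² (√2 v t)`, and the chain rule contributes the factor `(√2 v)^l`.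
-/

open Real

noncomputable def dv (v t : ℝ) : ℝ :=
  (1 / Real.sqrt 2) * Real.log ((8 / v ^ 2) * Real.cosh (Real.sqrt 2 * v * t) ^ 2)

open Polynomial

theorem Real.hasDerivAt_tanh (x : ℝ) : HasDerivAt tanh (1 - tanh x ^ 2) x := by
  have hc : cosh x ≠ 0 := (cosh_pos x).ne'
  rw [show (tanh : ℝ → ℝ) = sinh / cosh from funext tanh_eq_sinh_div_cosh]
  refine ((hasDerivAt_sinh x).div (hasDerivAt_cosh x) hc).congr_deriv ?_
  rw [Pi.div_apply]
  field_simp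

theorem Real.hasDerivAt_inv_cosh_sq (x : ℝ) :
    HasDerivAt (fun y => (cosh y ^ 2)⁻¹) (-2 * tanh x * (cosh x ^ 2)⁻¹) x := by
  have hc : cosh x ≠ 0 := (cosh_pos x).ne'
  refine (((hasDerivAt_cosh x).pow 2).inv (pow_ne_zero 2 hc)).congr_deriv ?_
  rw [tanh_eq_sinh_div_cosh, Pi.pow_apply]
  field_simp
  ring

theorem Real.inv_cosh_sq_le (x : ℝ) : (cosh x ^ 2)⁻¹ ≤ 4 * exp (-2 * |x|) := by
  have h_half_exp : exp |x| / 2 ≤ cosh x := by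
    rw [← cosh_abs, cosh_eq]
    linarith [exp_pos (-|x|)]
  have h_exp : 4 * exp (-2 * |x|) = ((exp |x| / 2) ^ 2)⁻¹ := by
    rw [div_pow, ← exp_nat_mul, inv_div, div_eq_mul_inv, ← exp_neg]; push_cast; ring_nf
  rw [h_exp]
  gcongr

theorem Polynomial.abs_eval_le_sum_abs_coeff (p : ℝ[X]) {x : ℝ} (hx : |x| ≤ 1) :
    |p.eval x| ≤ p.sum fun _ c => |c| := by
  rw [eval_eq_sum, sum_def, sum_def]
  refine (Finset.abs_sum_le_sum_abs _ _).trans (Finset.sum_le_sum fun i _ => ?_)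
  rw [abs_mul, abs_pow]
  exact mul_le_of_le_one_right (abs_nonneg _) (pow_le_one₀ (abs_nonneg x) hx)

-- Since `sech² ' = -2 tanh · sech²` and `tanh' = 1 - tanh²`, differentiating `sech² x · p (tanh x)`
-- gives `sech² x · q (tanh x)` with `q = sechSqDerivPoly p`.
noncomputable def sechSqDerivPoly (p : ℝ[X]) : ℝ[X] := (1 - X ^ 2) * derivative p - 2 * X * p

noncomputable def sechSqMulPolyTanh (p : ℝ[X]) (x : ℝ) : ℝ := (cosh x ^ 2)⁻¹ * p.eval (tanh x)

theorem hasDerivAt_sechSqMulPolyTanh (p : ℝ[X]) (x : ℝ) :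
    HasDerivAt (sechSqMulPolyTanh p) (sechSqMulPolyTanh (sechSqDerivPoly p) x) x := by
  refine ((hasDerivAt_inv_cosh_sq x).mul
    ((p.hasDerivAt (tanh x)).comp x (hasDerivAt_tanh x))).congr_deriv ?_
  simp only [sechSqMulPolyTanh, sechSqDerivPoly, eval_sub, eval_mul, eval_one, eval_pow, eval_X,
    eval_ofNat, Function.comp_apply]
  ring

theorem iteratedDeriv_sechSqMulPolyTanh_comp_const_mul (p : ℝ[X]) (a : ℝ) (l : ℕ) :
    iteratedDeriv l (fun s => sechSqMulPolyTanh p (a * s)) =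
      fun s => a ^ l * sechSqMulPolyTanh (sechSqDerivPoly^[l] p) (a * s) := by
  induction l with
  | zero => simp
  | succ l ih =>
    rw [iteratedDeriv_succ, ih, Function.iterate_succ_apply']
    funext s
    have hd := ((hasDerivAt_sechSqMulPolyTanh (sechSqDerivPoly^[l] p) (a * s)).comp s
      ((hasDerivAt_id s).const_mul a)).const_mul (a ^ l)
    exact hd.deriv.trans (by ring)

theorem abs_sechSqMulPolyTanh_le (p : ℝ[X]) (x : ℝ) :
    |sechSqMulPolyTanh p x| ≤ 4 * (p.sum fun _ c => |c|) * exp (-2 * |x|) := by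
  rw [sechSqMulPolyTanh, abs_mul, abs_of_pos (by positivity), mul_right_comm]
  exact mul_le_mul (inv_cosh_sq_le x) (p.abs_eval_le_sum_abs_coeff (abs_tanh_lt_one x).le)
    (abs_nonneg _) (by positivity)

theorem abs_iteratedDeriv_inv_cosh_sq_comp_const_mul_le (l : ℕ) (a t : ℝ) :
    |iteratedDeriv l (fun s => (cosh (a * s) ^ 2)⁻¹) t| ≤
      4 * ((sechSqDerivPoly^[l] 1).sum fun _ c => |c|) * |a| ^ l * exp (-2 * |a| * |t|) := by
  have h := iteratedDeriv_sechSqMulPolyTanh_comp_const_mul 1 a l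
  simp only [sechSqMulPolyTanh, eval_one, mul_one] at h
  rw [h, abs_mul, abs_pow]
  calc |a| ^ l * |sechSqMulPolyTanh (sechSqDerivPoly^[l] 1) (a * t)|
      ≤ |a| ^ l * (4 * ((sechSqDerivPoly^[l] 1).sum fun _ c => |c|) * exp (-2 * |a * t|)) := by
        gcongr; exact abs_sechSqMulPolyTanh_le _ _
    _ = _ := by rw [abs_mul]; ring_nf

theorem exp_neg_sqrt2_dv {v : ℝ} (hv : v ≠ 0) (t : ℝ) :
    exp (-√2 * dv v t) = v ^ 2 / 8 * (cosh (√2 * v * t) ^ 2)⁻¹ := by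
  have hlog : -√2 * dv v t = -log (8 / v ^ 2 * cosh (√2 * v * t) ^ 2) := by
    rw [dv]; field_simp
  rw [hlog, exp_neg, exp_log (by positivity), mul_inv, inv_div]

theorem exp_neg_sqrt2_dv_iteratedDeriv_bound_general (l : ℕ) :
    ∃ C : ℝ, 0 < C ∧ ∀ v : ℝ, 0 < v → v < 1 → ∀ t : ℝ,
      |iteratedDeriv l (fun s => Real.exp (-(Real.sqrt 2) * dv v s)) t| ≤
        C * v ^ (2 + l) * Real.exp (-2 * Real.sqrt 2 * v * |t|) := by
  set M := (sechSqDerivPoly^[l] 1).sum fun _ c => |c|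
  have hM : 0 ≤ M := Finset.sum_nonneg fun _ _ => abs_nonneg _
  refine ⟨√2 ^ l * (M + 1) / 2, by positivity, fun v hv _ t => ?_⟩
  have hbound := abs_iteratedDeriv_inv_cosh_sq_comp_const_mul_le l (√2 * v) t
  rw [abs_of_pos (a := √2 * v) (by positivity)] at hbound
  rw [funext (exp_neg_sqrt2_dv hv.ne'), iteratedDeriv_const_mul_field, abs_mul,
    abs_of_pos (by positivity)]
  calc v ^ 2 / 8 * |iteratedDeriv l (fun s => (cosh (√2 * v * s) ^ 2)⁻¹) t|
      ≤ v ^ 2 / 8 * (4 * M * (√2 * v) ^ l * exp (-2 * (√2 * v) * |t|)) := by gcongr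
    _ = √2 ^ l * M / 2 * v ^ (2 + l) * exp (-2 * √2 * v * |t|) := by ring_nf
    _ ≤ √2 ^ l * (M + 1) / 2 * v ^ (2 + l) * exp (-2 * √2 * v * |t|) := by gcongr; linarith

theorem exp_neg_sqrt2_dv_iteratedDeriv_bound (l : ℕ) (hl : 1 ≤ l) :
    ∃ C : ℝ, 0 < C ∧ ∀ v : ℝ, 0 < v → v < 1 → ∀ t : ℝ,
      |iteratedDeriv l (fun s => Real.exp (-(Real.sqrt 2) * dv v s)) t| ≤
        C * v ^ (2 + l) * Real.exp (-2 * Real.sqrt 2 * v * |t|) :=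
  exp_neg_sqrt2_dv_iteratedDeriv_bound_general l
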